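/- arXiv:0907.3415 — 3 statements merged into one kernel-verified Lean document; each statement's English description precedes it below -/
import Mathlib

section
/- If f : ℝ → ℝ is twice differentiable and satisfies (f')² − f·f'' − 1/12 = 0 and 12(f')² + k²f² = 1 on an open interval for a real constant k ≠ 0, then there exist real constants A, B with (A² + B²)k² = 1 such that f(t) = A·cos(k t/√12) + B·sin(k t/√12) on that interval. -/
/-!
Differentiating the conserved quantity `12 f'² + k² f²` gives `f' · (12 f'' + k² f) = 0`, while the
two equations together give `f · (12 f'' + k² f) = 0` algebraically. Since `f` and `f'` never vanish
simultaneously (again by `12 f'² + k² f² = 1`), `f` solves the harmonic oscillator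
`f'' = -ω² f` with `ω = k / √12`. Its solutions on an interval are `A cos ωt + B sin ωt`, because
the phase coordinates `(A, B)`, obtained by rotating `(f, f'/ω)` by the angle `ωt`, have zero
derivative; as a rotation preserves length, `A² + B² = f² + (f'/ω)²`, which is `1 / k²`.
-/

open Real

section Constancy

variable {𝕜 : Type*} [RCLike 𝕜] {G : Type*} [NormedAddCommGroup G] [NormedSpace 𝕜 G]
  {s : Set 𝕜} {g : 𝕜 → G}

theorem IsOpen.is_const_of_hasDerivAt_zero (hs : IsOpen s) (hs' : IsPreconnected s)
    (hg : ∀ t ∈ s, HasDerivAt g 0 t) {x y : 𝕜} (hx : x ∈ s) (hy : y ∈ s) : g x = g y :=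
  hs.is_const_of_deriv_eq_zero hs' (fun t ht => (hg t ht).differentiableAt.differentiableWithinAt)
    (fun t ht => (hg t ht).deriv) hx hy

theorem IsOpen.hasDerivAt_eq_zero_of_eqOn_const (hs : IsOpen s) {c g' : G} {t : 𝕜}
    (hg : Set.EqOn g (fun _ => c) s) (ht : t ∈ s) (h : HasDerivAt g g' t) : g' = 0 := by
  rw [← h.deriv, (hg.eventuallyEq_of_mem (hs.mem_nhds ht)).deriv_eq]
  exact deriv_const t c

end Constancy

section HarmonicOscillator

variable {f f' : ℝ → ℝ} {ω t : ℝ}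

theorem hasDerivAt_cos_phase (hω : ω ≠ 0) (hf : HasDerivAt f (f' t) t)
    (hf' : HasDerivAt f' (-ω ^ 2 * f t) t) :
    HasDerivAt (fun t => f t * cos (ω * t) - f' t / ω * sin (ω * t)) 0 t := by
  have hωt : HasDerivAt (fun t => ω * t) ω t := by simpa using (hasDerivAt_id t).const_mul ω
  have hcos := hωt.cos
  have hsin := hωt.sin
  refine ((hf.mul hcos).sub ((hf'.div_const ω).mul hsin)).congr_deriv ?_
  field_simp
  ring

theorem hasDerivAt_sin_phase (hω : ω ≠ 0) (hf : HasDerivAt f (f' t) t)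
    (hf' : HasDerivAt f' (-ω ^ 2 * f t) t) :
    HasDerivAt (fun t => f t * sin (ω * t) + f' t / ω * cos (ω * t)) 0 t := by
  have hωt : HasDerivAt (fun t => ω * t) ω t := by simpa using (hasDerivAt_id t).const_mul ω
  have hcos := hωt.cos
  have hsin := hωt.sin
  refine ((hf.mul hsin).add ((hf'.div_const ω).mul hcos)).congr_deriv ?_
  field_simp
  ring

theorem exists_eq_cos_add_sin_of_hasDerivAt {s : Set ℝ} (hs : IsOpen s) (hs' : IsPreconnected s)
    (hω : ω ≠ 0) (hf : ∀ t ∈ s, HasDerivAt f (f' t) t)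
    (hf' : ∀ t ∈ s, HasDerivAt f' (-ω ^ 2 * f t) t) {t₀ : ℝ} (ht₀ : t₀ ∈ s) :
    ∃ A B : ℝ, A ^ 2 + B ^ 2 = f t₀ ^ 2 + (f' t₀ / ω) ^ 2 ∧
      ∀ t ∈ s, f t = A * cos (ω * t) + B * sin (ω * t) := by
  refine ⟨f t₀ * cos (ω * t₀) - f' t₀ / ω * sin (ω * t₀),
    f t₀ * sin (ω * t₀) + f' t₀ / ω * cos (ω * t₀), ?_, fun t ht => ?_⟩
  · linear_combination (f t₀ ^ 2 + (f' t₀ / ω) ^ 2) * sin_sq_add_cos_sq (ω * t₀)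
  · have hA := hs.is_const_of_hasDerivAt_zero hs'
      (fun t ht => hasDerivAt_cos_phase hω (hf t ht) (hf' t ht)) ht₀ ht
    have hB := hs.is_const_of_hasDerivAt_zero hs'
      (fun t ht => hasDerivAt_sin_phase hω (hf t ht) (hf' t ht)) ht₀ ht
    rw [hA, hB]
    linear_combination (-f t) * sin_sq_add_cos_sq (ω * t)

end HarmonicOscillator

theorem twelve_mul_add_sq_mul_eq_zero_of_odes {s : Set ℝ} (hs : IsOpen s) {k : ℝ} {f f' f'' : ℝ → ℝ}
    (hf : ∀ t ∈ s, HasDerivAt f (f' t) t) (hf' : ∀ t ∈ s, HasDerivAt f' (f'' t) t)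
    (hode1 : ∀ t ∈ s, (f' t) ^ 2 - f t * f'' t - 1 / 12 = 0)
    (hode2 : ∀ t ∈ s, 12 * (f' t) ^ 2 + k ^ 2 * (f t) ^ 2 = 1) {t : ℝ} (ht : t ∈ s) :
    12 * f'' t + k ^ 2 * f t = 0 := by
  have hf'_mul : f' t * (12 * f'' t + k ^ 2 * f t) = 0 := by
    have hE : HasDerivAt (fun t => 12 * f' t ^ 2 + k ^ 2 * f t ^ 2)
        (2 * (f' t * (12 * f'' t + k ^ 2 * f t))) t := by
      refine ((((hf' t ht).pow 2).const_mul 12).add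
        (((hf t ht).pow 2).const_mul (k ^ 2))).congr_deriv ?_
      push_cast
      ring
    simpa using hs.hasDerivAt_eq_zero_of_eqOn_const hode2 ht hE
  have hf_mul : f t * (12 * f'' t + k ^ 2 * f t) = 0 := by
    linear_combination hode2 t ht - 12 * hode1 t ht
  have hf_or_hf' : f t ≠ 0 ∨ f' t ≠ 0 := by
    by_contra! h
    simpa [h.1, h.2] using hode2 t ht
  rcases hf_or_hf' with h | h
  · exact (mul_eq_zero.1 hf_mul).resolve_left h
  · exact (mul_eq_zero.1 hf'_mul).resolve_left h

theorem stmt_0 (a b k : ℝ) (hk : k ≠ 0) (f f' f'' : ℝ → ℝ)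
    (hf : ∀ t ∈ Set.Ioo a b, HasDerivAt f (f' t) t)
    (hf' : ∀ t ∈ Set.Ioo a b, HasDerivAt f' (f'' t) t)
    (hode1 : ∀ t ∈ Set.Ioo a b, (f' t) ^ 2 - f t * f'' t - 1 / 12 = 0)
    (hode2 : ∀ t ∈ Set.Ioo a b, 12 * (f' t) ^ 2 + k ^ 2 * (f t) ^ 2 = 1) :
    ∃ A B : ℝ, (A ^ 2 + B ^ 2) * k ^ 2 = 1 ∧
      ∀ t ∈ Set.Ioo a b,
        f t = A * Real.cos (k * t / Real.sqrt 12) + B * Real.sin (k * t / Real.sqrt 12) := by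
  rcases (Set.Ioo a b).eq_empty_or_nonempty with he | ⟨t₀, ht₀⟩
  · exact ⟨1 / k, 0, by field_simp; ring, by simp [he]⟩
  obtain ⟨ω, hω⟩ : ∃ ω, ω = k / √12 := ⟨_, rfl⟩
  have hω2 : ω ^ 2 = k ^ 2 / 12 := by rw [hω, div_pow, sq_sqrt (by norm_num)]
  have hf'' : ∀ t ∈ Set.Ioo a b, HasDerivAt f' (-ω ^ 2 * f t) t := fun t ht => by
    convert hf' t ht using 1
    linear_combination -hω2 * f t - twelve_mul_add_sq_mul_eq_zero_of_odes isOpen_Ioo hf hf' hode1 hode2 ht / 12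
  obtain ⟨A, B, hAB, hfAB⟩ := exists_eq_cos_add_sin_of_hasDerivAt isOpen_Ioo isPreconnected_Ioo
    (hω ▸ div_ne_zero hk (by positivity)) hf hf'' ht₀
  refine ⟨A, B, ?_, fun t ht => by rw [hfAB t ht, hω, mul_div_right_comm]⟩
  rw [hAB, div_pow, hω2]
  field_simp
  linear_combination hode2 t₀ ht₀
end

section
/- Suppose functions f, h, a₁, a₂, a₃ : I → ℝ on an open interval satisfy: a₁ + √12·f' = 0, h = (2/√3)·f, aᵢ' − (f'/f)·aᵢ − (h/(4f²))·δ_{i1} = 0 for i = 1,2,3, and a₁² + a₂² + a₃² = 1 with f > 0. Then f satisfies (f')² − f·f'' − 1/12 = 0 and there exist constants k, k̃ with a₂ = k·f and a₃ = k̃·f on I, and 12(f')² + (k² + k̃²)f² = 1. -/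
/-!
Substituting `a₁ = -√12 f'` (hence `a₁' = -√12 f''`) and `h = 2 f / √3` into the equation for
`a₁` leaves a purely algebraic relation between `f`, `f'`, `f''`, which is the first identity.
For `i = 2, 3` the equation says exactly that `aᵢ / f` has derivative zero, so `aᵢ = k f` on the
connected interval; then `a₁² + a₂² + a₃² = 1` becomes `12 f'² + (k² + k̃²) f² = 1`.
-/

open Set

theorem IsOpen.exists_eq_const_mul_of_hasDerivAt_eq_div_mul {𝕜 : Type*} [RCLike 𝕜] {s : Set 𝕜}
    (hs : IsOpen s) (hs' : IsPreconnected s) {a a' f f' : 𝕜 → 𝕜}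
    (ha : ∀ t ∈ s, HasDerivAt a (a' t) t) (hf : ∀ t ∈ s, HasDerivAt f (f' t) t)
    (hf0 : ∀ t ∈ s, f t ≠ 0) (heq : ∀ t ∈ s, a' t = f' t / f t * a t) :
    ∃ k, ∀ t ∈ s, a t = k * f t := by
  have hquot : ∀ t ∈ s, HasDerivAt (fun u ↦ a u / f u) 0 t := fun t ht ↦ by
    refine ((ha t ht).div (hf t ht) (hf0 t ht)).congr_deriv ?_
    rw [heq t ht, div_mul_eq_mul_div, div_mul_cancel₀ _ (hf0 t ht)]
    ring
  obtain ⟨k, hk⟩ := hs.exists_is_const_of_deriv_eq_zero hs'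
    (fun t ht ↦ (hquot t ht).differentiableAt.differentiableWithinAt)
    (fun t ht ↦ (hquot t ht).deriv)
  exact ⟨k, fun t ht ↦ (div_eq_iff (hf0 t ht)).mp (hk t ht)⟩

theorem sq_sub_mul_sub_one_div_twelve_eq_zero {F F' F'' : ℝ} (hF : F ≠ 0)
    (h : -√12 * F'' - F' / F * (-√12 * F') - 2 / √3 * F / (4 * F ^ 2) = 0) :
    F' ^ 2 - F * F'' - 1 / 12 = 0 := by
  have h36 : √3 * √12 = 6 := by
    rw [← Real.sqrt_mul (by norm_num), show (3 : ℝ) * 12 = 6 * 6 by norm_num,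
      Real.sqrt_mul_self (by norm_num)]
  field_simp at h
  linear_combination h / 24 - (F' ^ 2 - F * F'') / 6 * h36

theorem stmt_5 (x y : ℝ) (f f' f'' h a₁ a₂ a₃ a₁' a₂' a₃' : ℝ → ℝ)
    (hfd : ∀ t ∈ Set.Ioo x y, HasDerivAt f (f' t) t)
    (hfd' : ∀ t ∈ Set.Ioo x y, HasDerivAt f' (f'' t) t)
    (ha₁d : ∀ t ∈ Set.Ioo x y, HasDerivAt a₁ (a₁' t) t)
    (ha₂d : ∀ t ∈ Set.Ioo x y, HasDerivAt a₂ (a₂' t) t)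
    (ha₃d : ∀ t ∈ Set.Ioo x y, HasDerivAt a₃ (a₃' t) t)
    (hfpos : ∀ t ∈ Set.Ioo x y, 0 < f t)
    (heq1 : ∀ t ∈ Set.Ioo x y, a₁ t + Real.sqrt 12 * f' t = 0)
    (heqh : ∀ t ∈ Set.Ioo x y, h t = (2 / Real.sqrt 3) * f t)
    (heq2 : ∀ t ∈ Set.Ioo x y,
      a₁' t - (f' t / f t) * a₁ t - h t / (4 * (f t) ^ 2) = 0)
    (heq3 : ∀ t ∈ Set.Ioo x y, a₂' t - (f' t / f t) * a₂ t = 0)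
    (heq4 : ∀ t ∈ Set.Ioo x y, a₃' t - (f' t / f t) * a₃ t = 0)
    (hsum : ∀ t ∈ Set.Ioo x y, (a₁ t) ^ 2 + (a₂ t) ^ 2 + (a₃ t) ^ 2 = 1) :
    (∀ t ∈ Set.Ioo x y, (f' t) ^ 2 - f t * f'' t - 1 / 12 = 0) ∧
      ∃ k k' : ℝ, (∀ t ∈ Set.Ioo x y, a₂ t = k * f t ∧ a₃ t = k' * f t) ∧
        ∀ t ∈ Set.Ioo x y, 12 * (f' t) ^ 2 + (k ^ 2 + k' ^ 2) * (f t) ^ 2 = 1 := by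
  have ha₁ : ∀ t ∈ Ioo x y, a₁ t = -√12 * f' t := fun t ht ↦ by linear_combination heq1 t ht
  have ha₁' : ∀ t ∈ Ioo x y, a₁' t = -√12 * f'' t := fun t ht ↦
    (ha₁d t ht).unique <| ((hfd' t ht).const_mul _).congr_of_eventuallyEq <|
      Filter.eventually_of_mem (isOpen_Ioo.mem_nhds ht) ha₁
  have hf : ∀ t ∈ Ioo x y, f' t ^ 2 - f t * f'' t - 1 / 12 = 0 := fun t ht ↦
    sq_sub_mul_sub_one_div_twelve_eq_zero (hfpos t ht).ne' <| by
      simpa only [ha₁ t ht, ha₁' t ht, heqh t ht] using heq2 t ht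
  obtain ⟨k, hk⟩ := isOpen_Ioo.exists_eq_const_mul_of_hasDerivAt_eq_div_mul isPreconnected_Ioo
    ha₂d hfd (fun t ht ↦ (hfpos t ht).ne') fun t ht ↦ sub_eq_zero.mp (heq3 t ht)
  obtain ⟨k', hk'⟩ := isOpen_Ioo.exists_eq_const_mul_of_hasDerivAt_eq_div_mul isPreconnected_Ioo
    ha₃d hfd (fun t ht ↦ (hfpos t ht).ne') fun t ht ↦ sub_eq_zero.mp (heq4 t ht)
  refine ⟨hf, k, k', fun t ht ↦ ⟨hk t ht, hk' t ht⟩, fun t ht ↦ ?_⟩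
  have h12 : √12 ^ 2 = 12 := Real.sq_sqrt (by norm_num)
  have hsum_t := hsum t ht
  rw [ha₁ t ht, hk t ht, hk' t ht] at hsum_t
  linear_combination hsum_t - f' t ^ 2 * h12
end

section
/- Let V be a finite-dimensional real inner product space with compatible complex structure J (J orthogonal, J² = −id) and let h : V × V → W be a symmetric bilinear map into an inner product space W satisfying h(X, JY) + h(JX, Y) = 2·J'·h(X,Y) for a complex structure J' on W compatible with the inner product of W. If v ∈ V is a unit vector maximizing ‖h(w,w)‖² over unit vectors w, then for every w ∈ V orthogonal to v, ⟨h(v,v), h(v,w)⟩ = 0. -/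
/-!
Along the great circle `c t = cos t • v + sin t • w` through `v` in the direction of a unit vector
`w ⊥ v`, the function `t ↦ ‖h(c t, c t)‖²` is maximal at `t = 0`. By symmetry of `h` its derivative
there is `4 ⟪h(v,v), h(v,w)⟫`, which must therefore vanish; the general case follows by rescaling `w`.
-/

open scoped RealInnerProductSpace
open Real

section

variable {V W : Type*} [NormedAddCommGroup V] [InnerProductSpace ℝ V]
  [NormedAddCommGroup W] [InnerProductSpace ℝ W]

theorem inner_eq_zero_of_isLocalMax_norm_sq {γ : ℝ → W} {γ' : W} {t₀ : ℝ}
    (hγ : HasDerivAt γ γ' t₀) (hmax : IsLocalMax (‖γ ·‖ ^ 2) t₀) : ⟪γ t₀, γ'⟫ = 0 := by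
  have hderiv := hmax.hasDerivAt_eq_zero hγ.norm_sq
  linarith

theorem norm_cos_smul_add_sin_smul {v w : V} (hv : ‖v‖ = 1) (hw : ‖w‖ = 1) (hvw : ⟪v, w⟫ = 0)
    (t : ℝ) : ‖cos t • v + sin t • w‖ = 1 := by
  have horth : ⟪cos t • v, sin t • w⟫ = 0 := by
    rw [real_inner_smul_left, real_inner_smul_right, hvw, mul_zero, mul_zero]
  rw [← pow_eq_one_iff_of_nonneg (norm_nonneg _) two_ne_zero, sq,
    norm_add_sq_eq_norm_sq_add_norm_sq_real horth]
  simp only [norm_smul, hv, hw, mul_one, norm_eq_abs, ← sq, sq_abs, cos_sq_add_sin_sq]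

theorem hasDerivAt_apply_cos_smul_add_sin_smul (h : V →ₗ[ℝ] V →ₗ[ℝ] W)
    (hsym : ∀ X Y : V, h X Y = h Y X) (v w : V) :
    HasDerivAt (fun t => h (cos t • v + sin t • w) (cos t • v + sin t • w))
      ((2 : ℝ) • h v w) 0 := by
  have hexpand : (fun t => h (cos t • v + sin t • w) (cos t • v + sin t • w)) =
      fun t => (cos t * cos t) • h v v + (2 * cos t * sin t) • h v w + (sin t * sin t) • h w w := by
    funext t
    simp only [map_add, map_smul, LinearMap.add_apply, LinearMap.smul_apply, hsym w v]
    module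
  rw [hexpand]
  have hcos := hasDerivAt_cos 0
  have hsin := hasDerivAt_sin 0
  convert ((((hcos.mul hcos).smul_const (h v v)).fun_add
    (((hcos.const_mul 2).mul hsin).smul_const (h v w))).fun_add
    ((hsin.mul hsin).smul_const (h w w))) using 1 <;> norm_num

variable (h : V →ₗ[ℝ] V →ₗ[ℝ] W) (hsym : ∀ X Y : V, h X Y = h Y X) {v : V} (hv : ‖v‖ = 1)
  (hmax : ∀ w : V, ‖w‖ = 1 → ‖h w w‖ ^ 2 ≤ ‖h v v‖ ^ 2)
include hsym hv hmax

theorem inner_apply_self_apply_eq_zero_of_norm_eq_one {w : V} (hw : ‖w‖ = 1) (hvw : ⟪v, w⟫ = 0) :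
    ⟪h v v, h v w⟫ = 0 := by
  have hlocmax : IsLocalMax
      (fun t => ‖h (cos t • v + sin t • w) (cos t • v + sin t • w)‖ ^ 2) 0 :=
    Filter.Eventually.of_forall fun t => by
      simpa using hmax _ (norm_cos_smul_add_sin_smul hv hw hvw t)
  have hcrit := inner_eq_zero_of_isLocalMax_norm_sq
    (hasDerivAt_apply_cos_smul_add_sin_smul h hsym v w) hlocmax
  simpa [real_inner_smul_right] using hcrit

theorem inner_apply_self_apply_eq_zero {w : V} (hvw : ⟪v, w⟫ = 0) : ⟪h v v, h v w⟫ = 0 := by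
  rcases eq_or_ne w 0 with rfl | hw
  · simp
  have hunit : ‖‖w‖⁻¹ • w‖ = 1 := norm_smul_inv_norm hw
  have hscaled := inner_apply_self_apply_eq_zero_of_norm_eq_one h hsym hv hmax hunit
    (by rw [real_inner_smul_right, hvw, mul_zero])
  simpa [real_inner_smul_right, hw] using hscaled

end

theorem stmt_8_general (V W : Type*)
    [NormedAddCommGroup V] [InnerProductSpace ℝ V]
    [NormedAddCommGroup W] [InnerProductSpace ℝ W]
    (h : V →ₗ[ℝ] V →ₗ[ℝ] W)
    (hsym : ∀ X Y : V, h X Y = h Y X)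
    (v : V) (hv : ‖v‖ = 1)
    (hmax : ∀ w : V, ‖w‖ = 1 → ‖h w w‖ ^ 2 ≤ ‖h v v‖ ^ 2) :
    ∀ w : V, ⟪v, w⟫ = 0 → ⟪h v v, h v w⟫ = 0 :=
  fun _ => inner_apply_self_apply_eq_zero h hsym hv hmax

theorem stmt_8 (V W : Type*)
    [NormedAddCommGroup V] [InnerProductSpace ℝ V] [FiniteDimensional ℝ V]
    [NormedAddCommGroup W] [InnerProductSpace ℝ W] [FiniteDimensional ℝ W]
    (J : V →ₗ[ℝ] V)
    (hJorth : ∀ x y : V, ⟪J x, J y⟫ = ⟪x, y⟫)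
    (hJ2 : ∀ x : V, J (J x) = -x)
    (J' : W →ₗ[ℝ] W)
    (hJ'orth : ∀ x y : W, ⟪J' x, J' y⟫ = ⟪x, y⟫)
    (hJ'2 : ∀ x : W, J' (J' x) = -x)
    (h : V →ₗ[ℝ] V →ₗ[ℝ] W)
    (hsym : ∀ X Y : V, h X Y = h Y X)
    (hcomp : ∀ X Y : V, h X (J Y) + h (J X) Y = (2 : ℝ) • J' (h X Y))
    (v : V) (hv : ‖v‖ = 1)
    (hmax : ∀ w : V, ‖w‖ = 1 → ‖h w w‖ ^ 2 ≤ ‖h v v‖ ^ 2) :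
    ∀ w : V, ⟪v, w⟫ = 0 → ⟪h v v, h v w⟫ = 0 :=
  stmt_8_general V W h hsym v hv hmax
end
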